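/- Fix θ ∈ ℝ, σ > 0, α ∈ (0, 0.4), and for u ∈ ℝ, s > 0, t ∈ (0,1) define U_{u,s}(t) = Φ̄( (s/σ)·Φ̄^{−1}(t) + (u−θ)/σ ). There is a universal constant c > 0 such that for all x, y ≥ 0 and all t_0 ∈ (0, α), if (x/σ)·√(2 log(1/t_0)) + (y/σ)·2 log(1/t_0) ≤ 0.05, then max over t ∈ [t_0, α] of ( U_{θ−x, σ−y}(t) − t ) / t is at most c·( (x/σ)·√(2 log(1/t_0)) + (y/σ)·2 log(1/t_0) ). -/

import Mathlib

/-!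
Put `q = Φ̄⁻¹(t)` and `z = (y/σ) q + x/σ`, so that `U_{θ-x,σ-y}(t) = Φ̄(q - z)`, and let `ε` be
the right-hand side without `c`. Since `t₀ ≤ t`, the quantile bound `q ≤ √(2 log (1/t₀))` gives
`z q ≤ ε ≤ 0.05`. On `[q - z, q]` the density is at most `φ(q - z) ≤ e^{zq} φ(q)`, so
`Φ̄(q - z) - Φ̄(q) ≤ z e^{0.05} φ(q)`. Finally `t < 0.4` forces `q > 1/4`, where the Mills-type
bound `φ(q) ≤ e^{1 + 1/(2q²)} q Φ̄(q)` (integrate over `[q, q + 1/q]`) holds with a uniform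
constant, whence `U - t ≤ e^{10} z q t ≤ e^{10} ε t`.
-/

open Real

/-- Standard normal density. -/
noncomputable def gphi (t : ℝ) : ℝ := (Real.sqrt (2 * Real.pi))⁻¹ * Real.exp (-(t ^ 2) / 2)

/-- Standard normal upper-tail (survival) function. -/
noncomputable def Phibar (t : ℝ) : ℝ := ∫ s in Set.Ioi t, gphi s

/-- Inverse of the standard normal upper-tail function. -/
noncomputable def PhibarInv (x : ℝ) : ℝ := Function.invFun Phibar x

/-- The rescaling map $U_{u,s}(t)$ of the corrected $p$-values. -/
noncomputable def Umap (θ σ u s t : ℝ) : ℝ :=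
  Phibar ((s / σ) * PhibarInv t + (u - θ) / σ)

open MeasureTheory Set ProbabilityTheory

lemma gphi_eq_gaussianPDFReal : gphi = gaussianPDFReal 0 1 := by
  ext x
  simp [gphi, gaussianPDFReal]

lemma gphi_pos (x : ℝ) : 0 < gphi x := by
  rw [gphi_eq_gaussianPDFReal]
  exact gaussianPDFReal_pos 0 1 x one_ne_zero

lemma integrable_gphi : Integrable gphi :=
  gphi_eq_gaussianPDFReal ▸ integrable_gaussianPDFReal 0 1

lemma continuous_gphi : Continuous gphi := by
  unfold gphi
  fun_prop

lemma gphi_le (x : ℝ) : gphi x ≤ (√(2 * π))⁻¹ :=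
  mul_le_of_le_one_right (by positivity) (exp_le_one_iff.2 (by nlinarith))

lemma inv_sqrt_two_pi_le : (√(2 * π))⁻¹ ≤ 0.4 := by
  rw [inv_le_comm₀ (by positivity) (by norm_num), le_sqrt (by norm_num) (by positivity)]
  nlinarith [pi_gt_d2]

lemma gphi_neg (x : ℝ) : gphi (-x) = gphi x := by
  simp [gphi]

lemma integral_gphi : ∫ x, gphi x = 1 :=
  gphi_eq_gaussianPDFReal ▸ integral_gaussianPDFReal_eq_one 0 one_ne_zero

lemma gphi_add (q h : ℝ) : gphi (q + h) = exp (-(h * q + h ^ 2 / 2)) * gphi q := by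
  simp only [gphi]
  rw [mul_left_comm, ← exp_add]
  ring_nf

lemma gphi_le_gphi {a b : ℝ} (ha : 0 ≤ a) (hab : a ≤ b) : gphi b ≤ gphi a := by
  obtain ⟨h, hh, rfl⟩ : ∃ h, 0 ≤ h ∧ b = a + h := ⟨b - a, by linarith, by ring⟩
  rw [gphi_add]
  exact mul_le_of_le_one_left (gphi_pos a).le (exp_le_one_iff.2 (by nlinarith))

lemma Phibar_sub_Phibar {a b : ℝ} (hab : a ≤ b) :
    Phibar a - Phibar b = ∫ x in a..b, gphi x :=
  intervalIntegral.integral_Ioi_sub_Ioi integrable_gphi.integrableOn hab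

lemma Phibar_sub_Phibar_le {a b M : ℝ} (hab : a ≤ b) (hM : ∀ x ∈ Icc a b, gphi x ≤ M) :
    Phibar a - Phibar b ≤ (b - a) * M := by
  rw [Phibar_sub_Phibar hab, ← smul_eq_mul, ← intervalIntegral.integral_const]
  exact intervalIntegral.integral_mono_on hab (continuous_gphi.intervalIntegrable a b)
    intervalIntegrable_const hM

lemma le_Phibar_sub_Phibar {a b m : ℝ} (hab : a ≤ b) (hm : ∀ x ∈ Icc a b, m ≤ gphi x) :
    (b - a) * m ≤ Phibar a - Phibar b := by
  rw [Phibar_sub_Phibar hab, ← smul_eq_mul, ← intervalIntegral.integral_const]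
  exact intervalIntegral.integral_mono_on hab intervalIntegrable_const
    (continuous_gphi.intervalIntegrable a b) hm

lemma Phibar_nonneg (a : ℝ) : 0 ≤ Phibar a :=
  setIntegral_nonneg measurableSet_Ioi fun x _ => (gphi_pos x).le

lemma Phibar_antitone : Antitone Phibar := fun a b hab =>
  sub_nonneg.1 <| by simpa using le_Phibar_sub_Phibar hab fun x _ => (gphi_pos x).le

lemma Phibar_neg_add_Phibar (a : ℝ) : Phibar (-a) + Phibar a = 1 := by
  have hsplit := intervalIntegral.integral_Iic_add_Ioi (b := a) (μ := volume)
    integrable_gphi.integrableOn integrable_gphi.integrableOn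
  have hneg : ∫ x in Iic a, gphi x = Phibar (-a) := by
    simpa only [gphi_neg, Phibar] using integral_comp_neg_Iic a gphi
  rwa [hneg, integral_gphi] at hsplit

lemma Phibar_le_gphi_div {a : ℝ} (ha : 0 < a) : Phibar a ≤ gphi a / a := by
  -- on `x > a`, `-x²/2 ≤ a²/2 - a x`: dominate the density by an exponential tail
  have hdom : ∀ x ∈ Ioi a, gphi x ≤ gphi a * exp (a ^ 2) * exp (-a * x) := by
    intro x hx
    rw [← add_sub_cancel a x, gphi_add, mul_comm (exp _), mul_assoc, ← exp_add]
    exact mul_le_mul_of_nonneg_left (exp_le_exp.2 (by nlinarith [sq_nonneg (x - a)]))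
      (gphi_pos a).le
  calc Phibar a ≤ ∫ x in Ioi a, gphi a * exp (a ^ 2) * exp (-a * x) :=
        setIntegral_mono_on integrable_gphi.integrableOn
          ((integrableOn_exp_mul_Ioi (neg_lt_zero.2 ha) a).const_mul _) measurableSet_Ioi hdom
    _ = gphi a / a := by
        rw [integral_const_mul, integral_exp_mul_Ioi (neg_lt_zero.2 ha), mul_assoc,
          neg_div_neg_eq, ← mul_div_assoc, ← exp_add, show a ^ 2 + -a * a = 0 by ring,
          exp_zero, mul_one_div]

lemma Phibar_le_inv {a : ℝ} (ha : 0 < a) : Phibar a ≤ a⁻¹ :=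
  (Phibar_le_gphi_div ha).trans <| by
    rw [div_eq_mul_inv]
    exact mul_le_of_le_one_left (by positivity)
      ((gphi_le a).trans (inv_sqrt_two_pi_le.trans (by norm_num)))

lemma gphi_le_mul_Phibar {q : ℝ} (hq : 0 < q) :
    gphi q ≤ exp (1 + 1 / (2 * q ^ 2)) * q * Phibar q := by
  -- the density on `[q, q + 1/q]` is at least `gphi (q + 1/q) = exp (-(1 + 1/(2q²))) * gphi q`
  have hlow := le_Phibar_sub_Phibar (le_add_of_nonneg_right (inv_pos.2 hq).le)
    fun x hx => gphi_le_gphi (hq.le.trans hx.1) hx.2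
  have hexp : q⁻¹ * q + q⁻¹ ^ 2 / 2 = 1 + 1 / (2 * q ^ 2) := by field_simp
  rw [gphi_add, add_sub_cancel_left, hexp, exp_neg] at hlow
  set C := 1 + 1 / (2 * q ^ 2)
  calc gphi q = exp C * q * (q⁻¹ * ((exp C)⁻¹ * gphi q)) := by field_simp
    _ ≤ exp C * q * Phibar q := by
        gcongr
        linarith [Phibar_nonneg (q + q⁻¹)]

lemma exists_Phibar_eq {t : ℝ} (h0 : 0 < t) (h1 : t < 1) : ∃ a, Phibar a = t := by
  have hA : Phibar t⁻¹ ≤ t := (Phibar_le_inv (inv_pos.2 h0)).trans (inv_inv t).le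
  have hB : t ≤ Phibar (-(1 - t)⁻¹) := by
    linarith [Phibar_neg_add_Phibar (1 - t)⁻¹, (Phibar_le_inv (inv_pos.2 (sub_pos.2 h1))).trans
      (inv_inv (1 - t)).le]
  have hBA : -(1 - t)⁻¹ ≤ t⁻¹ := by
    linarith [inv_pos.2 h0, inv_pos.2 (sub_pos.2 h1)]
  obtain ⟨a, -, ha⟩ := intermediate_value_Icc' hBA
    (integrable_gphi.integrableOn.continuousOn_Ici_primitive_Ioi.mono Icc_subset_Ici_self)
    ⟨hA, hB⟩
  exact ⟨a, ha⟩

lemma Phibar_PhibarInv {t : ℝ} (h0 : 0 < t) (h1 : t < 1) : Phibar (PhibarInv t) = t :=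
  Function.invFun_eq (exists_Phibar_eq h0 h1)

lemma PhibarInv_le_sqrt_two_log {t : ℝ} (h0 : 0 < t) (h1 : t ≤ 1 / 2) :
    PhibarInv t ≤ √(2 * log (1 / t)) := by
  set s := √(2 * log (1 / t))
  have hlog : log 2 ≤ log (1 / t) := log_le_log (by norm_num) (by rw [le_div_iff₀ h0]; linarith)
  have hs2 : s ^ 2 = 2 * log (1 / t) := sq_sqrt (by linarith [log_two_gt_d9])
  have hs1 : 1 ≤ s := by nlinarith [log_two_gt_d9, sqrt_nonneg (2 * log (1 / t))]
  have hgs : gphi s = (√(2 * π))⁻¹ * t := by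
    rw [gphi, hs2, show -(2 * log (1 / t)) / 2 = log t by rw [one_div, log_inv]; ring,
      exp_log h0]
  have hPs : Phibar s < t :=
    calc Phibar s ≤ gphi s / s := Phibar_le_gphi_div (by linarith)
      _ ≤ gphi s := div_le_self (gphi_pos s).le hs1
      _ < t := by rw [hgs]; nlinarith [inv_sqrt_two_pi_le]
  by_contra! hsq
  linarith [Phibar_antitone hsq.le, Phibar_PhibarInv h0 (by linarith)]

lemma quarter_lt_PhibarInv {t : ℝ} (h0 : 0 < t) (h1 : t < 0.4) : 1 / 4 < PhibarInv t := by
  have hhalf : Phibar 0 = 1 / 2 := by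
    have := Phibar_neg_add_Phibar 0
    rw [neg_zero] at this
    linarith
  have hquarter : 0.4 ≤ Phibar (1 / 4) := by
    linarith [Phibar_sub_Phibar_le (by norm_num : (0 : ℝ) ≤ 1 / 4) fun x _ => gphi_le x,
      inv_sqrt_two_pi_le]
  by_contra! hq
  linarith [Phibar_antitone hq, Phibar_PhibarInv h0 (by linarith)]

lemma Phibar_sub_sub_Phibar_le {q z : ℝ} (hq : 1 / 4 < q) (hz : 0 ≤ z) (hzq : z * q ≤ 0.05) :
    Phibar (q - z) - Phibar q ≤ exp 10 * (z * q) * Phibar q := by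
  have hqz : 0 ≤ q - z := by nlinarith
  have hincr : Phibar (q - z) - Phibar q ≤ z * gphi (q - z) := by
    simpa using Phibar_sub_Phibar_le (sub_le_self q hz) fun x hx => gphi_le_gphi hqz hx.1
  have hshift : gphi (q - z) ≤ exp 0.05 * gphi q := by
    rw [sub_eq_add_neg, gphi_add]
    exact mul_le_mul_of_nonneg_right (exp_le_exp.2 (by nlinarith)) (gphi_pos q).le
  have hmills : gphi q ≤ exp 9 * q * Phibar q := by
    refine (gphi_le_mul_Phibar (by linarith)).trans ?_
    have hq8 : 1 / (2 * q ^ 2) ≤ 8 := by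
      rw [div_le_iff₀ (by positivity)]
      nlinarith
    gcongr
    · exact Phibar_nonneg q
    · linarith
  calc Phibar (q - z) - Phibar q ≤ z * (exp 0.05 * (exp 9 * q * Phibar q)) := by
        refine hincr.trans (mul_le_mul_of_nonneg_left (hshift.trans ?_) hz)
        exact mul_le_mul_of_nonneg_left hmills (exp_pos _).le
    _ = exp (0.05 + 9) * (z * q) * Phibar q := by rw [exp_add]; ring
    _ ≤ exp 10 * (z * q) * Phibar q := by
        have hzq0 : 0 ≤ z * q := mul_nonneg hz (by linarith)
        exact mul_le_mul_of_nonneg_right (mul_le_mul_of_nonneg_right (exp_le_exp.2 (by norm_num))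
          hzq0) (Phibar_nonneg q)

theorem rescaled_null_bound :
    ∃ c : ℝ, 0 < c ∧
      ∀ (θ σ α : ℝ), 0 < σ → 0 < α → α < 0.4 →
        ∀ (x y : ℝ), 0 ≤ x → 0 ≤ y →
          ∀ t₀ : ℝ, 0 < t₀ → t₀ < α →
            (x / σ) * Real.sqrt (2 * Real.log (1 / t₀)) +
                (y / σ) * (2 * Real.log (1 / t₀)) ≤ 0.05 →
              ∀ t ∈ Set.Icc t₀ α,
                (Umap θ σ (θ - x) (σ - y) t - t) / t ≤
                  c * ((x / σ) * Real.sqrt (2 * Real.log (1 / t₀)) +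
                    (y / σ) * (2 * Real.log (1 / t₀))) := by
  refine ⟨exp 10, exp_pos 10, fun θ σ α hσ _ hα4 x y hx hy t₀ ht₀ ht₀α hsmall t ht => ?_⟩
  have ht0 : 0 < t := ht₀.trans_le ht.1
  have hPq : Phibar (PhibarInv t) = t := Phibar_PhibarInv ht0 (by linarith [ht.2])
  set ℓ := 2 * log (1 / t₀)
  set q := PhibarInv t
  set z := y / σ * q + x / σ
  have hq : 1 / 4 < q := quarter_lt_PhibarInv ht0 (ht.2.trans_lt hα4)
  have hqℓ : q ≤ √ℓ := (PhibarInv_le_sqrt_two_log ht0 (by linarith [ht.2])).trans <|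
    sqrt_le_sqrt <| mul_le_mul_of_nonneg_left
      (log_le_log (by positivity) (one_div_le_one_div_of_le ht₀ ht.1)) zero_le_two
  have hzq : z * q ≤ x / σ * √ℓ + y / σ * ℓ := by
    have hℓ : √ℓ ^ 2 = ℓ := sq_sqrt <|
      mul_nonneg zero_le_two (log_nonneg (one_le_one_div ht₀ (by linarith)))
    calc z * q = x / σ * q + y / σ * q ^ 2 := by ring
      _ ≤ x / σ * √ℓ + y / σ * √ℓ ^ 2 := by gcongr
      _ = x / σ * √ℓ + y / σ * ℓ := by rw [hℓ]
  have hU : Umap θ σ (θ - x) (σ - y) t = Phibar (q - z) := by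
    rw [Umap]
    congr 1
    simp only [z, q]
    field_simp
    ring
  rw [div_le_iff₀ ht0, hU]
  calc Phibar (q - z) - t = Phibar (q - z) - Phibar q := by rw [hPq]
    _ ≤ exp 10 * (z * q) * Phibar q :=
        Phibar_sub_sub_Phibar_le hq (by positivity) (hzq.trans hsmall)
    _ ≤ exp 10 * (x / σ * √ℓ + y / σ * ℓ) * t := by rw [hPq]; gcongr
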